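/- Exponential decay outside the support: let F ⊂ H be compact with diameter diam F, let μ be a probability measure on F, and let h ∈ H satisfy min_{f∈F} |π_n(f−h)| ≥ δ > 0. Then for all d, Λ^μ_{d,n}(h) ≤ 2^{3 − δ̄ d} where δ̄ = δ/(δ + diam F); equivalently, if M_{d,n}(μ) is nonsingular, the CD polynomial satisfies p^μ_{d,n}(h) ≥ 2^{δ̄ d − 3}. -/

import Mathlib

open MeasureTheory
open scoped RealInnerProductSpace

/-- The space `P_{d,n}` of polynomials on `H` of algebraic degree at most `d` and
harmonic degree at most `n`. -/
noncomputable def Pspace {H : Type*} [NormedAddCommGroup H] [InnerProductSpace ℝ H]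
    (b : HilbertBasis ℕ ℝ H) (d n : ℕ) : Submodule ℝ (H → ℝ) :=
  Submodule.span ℝ {p : H → ℝ | ∃ a : ℕ →₀ ℕ,
    (∀ k ∈ a.support, k < n) ∧ (a.sum fun _ m => m) ≤ d ∧
    p = fun f => ∏ k ∈ a.support, ⟪f, b k⟫ ^ a k}

/-- The Christoffel function `Λ^μ_{d,n}(h) = inf {∫ p² dμ : p ∈ P_{d,n}, p(h) = 1}`. -/
noncomputable def Lam {H : Type*} [NormedAddCommGroup H] [InnerProductSpace ℝ H]
    [MeasurableSpace H]
    (b : HilbertBasis ℕ ℝ H) (μ : Measure H) (d n : ℕ) (h : H) : ℝ :=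
  sInf {y : ℝ | ∃ p ∈ Pspace b d n, p h = 1 ∧ y = ∫ f, (p f) ^ 2 ∂μ}

section Aux
variable {H : Type*} [NormedAddCommGroup H] [InnerProductSpace ℝ H]
  (b : HilbertBasis ℕ ℝ H) {n : ℕ}

lemma gen_mem_Pspace {d : ℕ} (a : ℕ →₀ ℕ) (h1 : ∀ k ∈ a.support, k < n)
    (h2 : (a.sum fun _ m => m) ≤ d) :
    (fun f => ∏ k ∈ a.support, ⟪f, b k⟫ ^ a k) ∈ Pspace b d n :=
  Submodule.subset_span ⟨a, h1, h2, rfl⟩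

lemma Pspace_mono {d d' : ℕ} (hd : d ≤ d') : Pspace b d n ≤ Pspace b d' n :=
  Submodule.span_mono (fun p hp => by
    obtain ⟨a, h1, h2, h3⟩ := hp
    exact ⟨a, h1, h2.trans hd, h3⟩)

lemma const_mem_Pspace {d : ℕ} (c : ℝ) : (fun _ : H => c) ∈ Pspace b d n := by
  have h1 : (fun _ : H => (1:ℝ)) ∈ Pspace b d n := by
    have := gen_mem_Pspace b (d := d) (n := n) (0 : ℕ →₀ ℕ) (by simp) (by simp)
    simpa using this
  have h2 := Submodule.smul_mem (Pspace b d n) c h1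
  have : c • (fun _ : H => (1:ℝ)) = fun _ : H => c := by
    funext f; simp
  rwa [this] at h2

lemma coord_mem_Pspace {d k : ℕ} (hk : k < n) (hd : 1 ≤ d) :
    (fun f : H => ⟪f, b k⟫) ∈ Pspace b d n := by
  have h1 : ∀ j ∈ (Finsupp.single k 1 : ℕ →₀ ℕ).support, j < n := by
    intro j hj
    rw [Finsupp.support_single_ne_zero k one_ne_zero, Finset.mem_singleton] at hj
    exact hj ▸ hk
  have h2 : ((Finsupp.single k 1 : ℕ →₀ ℕ).sum fun _ m => m) ≤ d := by
    rw [Finsupp.sum_single_index rfl]; exact hd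
  have := gen_mem_Pspace b (Finsupp.single k 1) h1 h2
  simpa [Finsupp.support_single_ne_zero k one_ne_zero] using this

lemma mul_mem_Pspace {d1 d2 : ℕ} {p q : H → ℝ} (hp : p ∈ Pspace b d1 n)
    (hq : q ∈ Pspace b d2 n) : (fun f => p f * q f) ∈ Pspace b (d1 + d2) n := by
  induction hp using Submodule.span_induction with
  | mem p hp =>
    obtain ⟨a, ha1, ha2, rfl⟩ := hp
    induction hq using Submodule.span_induction with
    | mem q hq =>
      obtain ⟨a', ha1', ha2', rfl⟩ := hq
      have key : ∀ (c : ℕ →₀ ℕ) (f : H), c.support ⊆ a.support ∪ a'.support →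
          ∏ k ∈ c.support, ⟪f, b k⟫ ^ c k = ∏ k ∈ a.support ∪ a'.support, ⟪f, b k⟫ ^ c k := by
        intro c f hc
        exact Finset.prod_subset hc (fun x _ hx => by
          rw [Finsupp.notMem_support_iff.mp hx, pow_zero])
      have heq : (fun f : H => (∏ k ∈ a.support, ⟪f, b k⟫ ^ a k) *
          ∏ k ∈ a'.support, ⟪f, b k⟫ ^ a' k)
          = fun f : H => ∏ k ∈ (a + a').support, ⟪f, b k⟫ ^ (a + a') k := by
        funext f
        rw [key a f Finset.subset_union_left, key a' f Finset.subset_union_right,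
          key (a + a') f Finsupp.support_add, ← Finset.prod_mul_distrib]
        exact Finset.prod_congr rfl fun k _ => by rw [Finsupp.add_apply, pow_add]
      rw [heq]
      refine gen_mem_Pspace b _ ?_ ?_
      · intro j hj
        rcases Finset.mem_union.mp (Finsupp.support_add hj) with hj | hj
        · exact ha1 j hj
        · exact ha1' j hj
      · rw [Finsupp.sum_add_index' (fun _ => rfl) (fun _ _ _ => rfl)]
        exact add_le_add ha2 ha2'
    | zero =>
      have : (fun f : H => (∏ k ∈ a.support, ⟪f, b k⟫ ^ a k) * (0 : H → ℝ) f)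
          = fun _ : H => (0:ℝ) := by funext f; simp
      rw [this]
      exact Submodule.zero_mem _
    | add x y hx hy ihx ihy =>
      have : (fun f : H => (∏ k ∈ a.support, ⟪f, b k⟫ ^ a k) * (x + y) f)
          = (fun f : H => (∏ k ∈ a.support, ⟪f, b k⟫ ^ a k) * x f)
          + (fun f : H => (∏ k ∈ a.support, ⟪f, b k⟫ ^ a k) * y f) := by
        funext f; simp [Pi.add_apply]; ring
      rw [this]
      exact Submodule.add_mem _ ihx ihy
    | smul c x hx ihx =>
      have : (fun f : H => (∏ k ∈ a.support, ⟪f, b k⟫ ^ a k) * (c • x) f)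
          = c • (fun f : H => (∏ k ∈ a.support, ⟪f, b k⟫ ^ a k) * x f) := by
        funext f; simp [Pi.smul_apply]; ring
      rw [this]
      exact Submodule.smul_mem _ _ ihx
  | zero =>
    have : (fun f : H => (0 : H → ℝ) f * q f) = fun _ : H => (0:ℝ) := by funext f; simp
    rw [this]
    exact Submodule.zero_mem _
  | add x y hx hy ihx ihy =>
    have : (fun f : H => (x + y) f * q f)
        = (fun f : H => x f * q f) + (fun f : H => y f * q f) := by
      funext f; simp [Pi.add_apply]; ring
    rw [this]
    exact Submodule.add_mem _ ihx ihy
  | smul c x hx ihx =>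
    have : (fun f : H => (c • x) f * q f) = c • (fun f : H => x f * q f) := by
      funext f; simp [Pi.smul_apply]; ring
    rw [this]
    exact Submodule.smul_mem _ _ ihx

lemma cheb_mem_Pspace {u : H → ℝ} (hu : u ∈ Pspace b 2 n) (m : ℕ) :
    (fun f => (Polynomial.Chebyshev.T ℝ (m : ℤ)).eval (u f)) ∈ Pspace b (2 * m) n := by
  have key : ∀ m : ℕ,
      ((fun f => (Polynomial.Chebyshev.T ℝ (m : ℤ)).eval (u f)) ∈ Pspace b (2 * m) n) ∧
      ((fun f => (Polynomial.Chebyshev.T ℝ ((m+1 : ℕ) : ℤ)).eval (u f)) ∈ Pspace b (2 * (m+1)) n) := by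
    intro m
    induction m with
    | zero =>
      constructor
      · simpa [Polynomial.Chebyshev.T_zero] using const_mem_Pspace b (n := n) (d := 0) (1:ℝ)
      · have : (fun f => (Polynomial.Chebyshev.T ℝ ((1:ℕ) : ℤ)).eval (u f)) = u := by
          funext f; simp [Polynomial.Chebyshev.T_one]
        rw [this]; exact hu
    | succ k ih =>
      refine ⟨ih.2, ?_⟩
      have hT : (Polynomial.Chebyshev.T ℝ ((k+2 : ℕ) : ℤ))
          = 2 * Polynomial.X * Polynomial.Chebyshev.T ℝ ((k:ℤ) + 1)
            - Polynomial.Chebyshev.T ℝ (k : ℤ) := by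
        push_cast
        exact Polynomial.Chebyshev.T_add_two ℝ (k : ℤ)
      have heq : (fun f => (Polynomial.Chebyshev.T ℝ ((k+2 : ℕ) : ℤ)).eval (u f))
          = ((2:ℝ) • fun f => u f * ((Polynomial.Chebyshev.T ℝ ((k+1 : ℕ) : ℤ)).eval (u f)))
            - fun f => (Polynomial.Chebyshev.T ℝ ((k:ℕ) : ℤ)).eval (u f) := by
        funext f
        rw [hT]
        push_cast
        simp [Pi.sub_apply, Pi.smul_apply]
        ring
      rw [heq]
      refine Submodule.sub_mem _ ?_ ?_
      · refine Submodule.smul_mem _ _ ?_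
        have := mul_mem_Pspace b hu ih.2
        have harith : 2 + 2 * (k + 1) = 2 * (k + 1 + 1) := by ring
        exact harith ▸ this
      · exact Pspace_mono b (by omega) ih.1
  exact (key m).1

end Aux

lemma cheb_eval_cosh (m : ℕ) (t : ℝ) :
    (Polynomial.Chebyshev.T ℝ (m : ℤ)).eval (Real.cosh t) = Real.cosh (m * t) := by
  have h1 : ((( Polynomial.Chebyshev.T ℝ (m:ℤ)).eval (Real.cosh t) : ℝ) : ℂ)
      = (Polynomial.Chebyshev.T ℂ (m:ℤ)).eval ((Real.cosh t : ℝ) : ℂ) :=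
    Polynomial.Chebyshev.complex_ofReal_eval_T _ _
  rw [Complex.ofReal_cosh, ← Complex.cos_mul_I, Polynomial.Chebyshev.T_complex_cos] at h1
  have h2 : ((m:ℤ):ℂ) * ((t:ℂ) * Complex.I) = ((m * t : ℝ) : ℂ) * Complex.I := by
    push_cast; ring
  rw [h2, Complex.cos_mul_I, ← Complex.ofReal_cosh] at h1
  exact_mod_cast h1

lemma cheb_abs_le (m : ℕ) {z : ℝ} (h1 : -1 ≤ z) (h2 : z ≤ 1) :
    |(Polynomial.Chebyshev.T ℝ (m : ℤ)).eval z| ≤ 1 := by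
  have hz : z = Real.cos (Real.arccos z) := (Real.cos_arccos h1 h2).symm
  rw [hz, Polynomial.Chebyshev.T_real_cos]
  exact Real.abs_cos_le_one _

lemma two_rpow_le_one_add {x : ℝ} (h0 : 0 ≤ x) (h1 : x ≤ 1) : (2:ℝ) ^ x ≤ 1 + x := by
  have hc := convexOn_exp.2 (Set.mem_univ (0:ℝ)) (Set.mem_univ (Real.log 2))
    (by linarith : (0:ℝ) ≤ 1 - x) h0 (by ring)
  have he : Real.exp (Real.log 2) = 2 := Real.exp_log two_pos
  rw [smul_eq_mul, smul_eq_mul, smul_eq_mul, smul_eq_mul, mul_zero, zero_add, Real.exp_zero,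
    he, mul_one] at hc
  rw [Real.rpow_def_of_pos two_pos]
  calc Real.exp (Real.log 2 * x) = Real.exp (x * Real.log 2) := by rw [mul_comm]
    _ ≤ 1 - x + x * 2 := hc
    _ = 1 + x := by ring

lemma exp_le_cosh' (x : ℝ) : Real.exp x / 2 ≤ Real.cosh x := by
  rw [Real.cosh_eq]
  have := (Real.exp_pos (-x)).le
  linarith

set_option maxHeartbeats 2000000 in
/-- Exponential decay of the Christoffel function outside the support: if
`|π_n(f-h)| ≥ δ > 0` for all `f ∈ F`, then for all `d`,
`Λ^μ_{d,n}(h) ≤ 2^{3 - δ̄ d}` with `δ̄ = δ / (δ + diam F)`. -/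
theorem Lam_exponential_decay_outside
    {H : Type*} [NormedAddCommGroup H] [InnerProductSpace ℝ H] [CompleteSpace H]
    [MeasurableSpace H] [BorelSpace H]
    (b : HilbertBasis ℕ ℝ H) (F : Set H) (hF : IsCompact F)
    (μ : Measure H) [IsProbabilityMeasure μ] (hsupp : μ Fᶜ = 0)
    (n : ℕ) (h : H) (δ : ℝ) (hδ : 0 < δ)
    (hsep : ∀ f ∈ F, δ ≤ ‖(∑ k ∈ Finset.range n, ⟪f - h, b k⟫ • b k : H)‖) :
    ∀ d : ℕ, Lam b μ d n h ≤
      2 ^ ((3 : ℝ) - (δ / (δ + Metric.diam F)) * (d : ℝ)) := by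
  intro d
  classical
  set D := Metric.diam F with hD
  have hD0 : 0 ≤ D := Metric.diam_nonneg
  have hFne : F.Nonempty := by
    rcases Set.eq_empty_or_nonempty F with hFe | hFne
    · exfalso
      have h0 : μ Set.univ = 0 := by
        rw [← Set.compl_empty, ← hFe]; exact hsupp
      simp [measure_univ] at h0
    · exact hFne
  set N : H → ℝ := fun v => ‖(∑ k ∈ Finset.range n, ⟪v - h, b k⟫ • b k : H)‖ with hN
  have hNc : Continuous N := by
    have hg : Continuous fun v : H => (∑ k ∈ Finset.range n, ⟪v - h, b k⟫ • b k : H) :=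
      continuous_finset_sum _ fun k _ =>
        (Continuous.inner (continuous_id.sub continuous_const) continuous_const).smul
          continuous_const
    exact hg.norm
  obtain ⟨f₀, hf₀F, hf₀min⟩ := hF.exists_isMinOn hFne hNc.continuousOn
  set s := N f₀ with hs
  have hδs : δ ≤ s := hsep f₀ hf₀F
  have hs0 : 0 < s := lt_of_lt_of_le hδ hδs
  -- Bessel facts
  have hsq : ∀ v : H, ‖(∑ k ∈ Finset.range n, ⟪v, b k⟫ • b k : H)‖ ^ 2
      = ∑ k ∈ Finset.range n, ⟪v, b k⟫ ^ 2 := by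
    intro v
    have h2 := b.orthonormal.inner_sum (fun k => ⟪v, b k⟫) (fun k => ⟪v, b k⟫) (Finset.range n)
    simp only [starRingEnd_apply, star_trivial] at h2
    rw [← real_inner_self_eq_norm_sq, h2]
    exact Finset.sum_congr rfl fun k _ => (pow_two _).symm
  have hbessel : ∀ v : H, ‖(∑ k ∈ Finset.range n, ⟪v, b k⟫ • b k : H)‖ ≤ ‖v‖ := by
    intro v
    have h1 : ‖(∑ k ∈ Finset.range n, ⟪v, b k⟫ • b k : H)‖ ^ 2 ≤ ‖v‖ ^ 2 := by
      rw [hsq v]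
      have hb := b.orthonormal.sum_inner_products_le (𝕜 := ℝ) (s := Finset.range n) v
      refine le_trans (le_of_eq ?_) hb
      exact Finset.sum_congr rfl fun k _ => by
        rw [real_inner_comm, Real.norm_eq_abs, sq_abs]
    have h2 := Real.sqrt_le_sqrt h1
    rwa [Real.sqrt_sq (norm_nonneg _), Real.sqrt_sq (norm_nonneg _)] at h2
  have hNlb : ∀ f ∈ F, s ≤ N f := fun f hf => isMinOn_iff.mp hf₀min f hf
  have hNub : ∀ f ∈ F, N f ≤ s + D := by
    intro f hf
    have hsplit : (∑ k ∈ Finset.range n, ⟪f - h, b k⟫ • b k : H)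
        = (∑ k ∈ Finset.range n, ⟪f₀ - h, b k⟫ • b k)
          + ∑ k ∈ Finset.range n, ⟪f - f₀, b k⟫ • b k := by
      rw [← Finset.sum_add_distrib]
      refine Finset.sum_congr rfl fun k _ => ?_
      rw [← add_smul, ← inner_add_left]
      congr 2
      abel
    have h1 : N f ≤ s + ‖(∑ k ∈ Finset.range n, ⟪f - f₀, b k⟫ • b k : H)‖ := by
      rw [hN]
      simp only []
      rw [hsplit]
      exact norm_add_le _ _
    have h2 : ‖(∑ k ∈ Finset.range n, ⟪f - f₀, b k⟫ • b k : H)‖ ≤ ‖f - f₀‖ := hbessel _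
    have h3 : ‖f - f₀‖ ≤ D := by
      rw [← dist_eq_norm]
      exact Metric.dist_le_diam_of_mem hF.isBounded hf hf₀F
    linarith
  -- main estimate for each ε > 0
  have key : ∀ ε : ℝ, 0 < ε → Lam b μ d n h ≤ 2 ^ ((3:ℝ) - s / (s + (D + ε)) * d) := by
    intro ε hε
    set D' := D + ε with hD'def
    have hD' : 0 < D' := by positivity
    set m := d / 2 with hm
    set aa := s ^ 2 with haa
    set bb := (s + D') ^ 2 with hbb
    have hba : 0 < bb - aa := by nlinarith
    set r := (2 * s + D') / D' with hr
    have hr1 : 1 < r := by rw [hr, lt_div_iff₀ hD']; linarith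
    have hr0 : 0 < r := by linarith
    set x : H → ℝ := fun f => ∑ k ∈ Finset.range n, ⟪f - h, b k⟫ ^ 2 with hx
    set u : H → ℝ := fun f => (aa + bb - 2 * x f) / (bb - aa) with hu
    set t0 : ℝ := (aa + bb) / (bb - aa) with ht0
    set Tval := (Polynomial.Chebyshev.T ℝ (m:ℤ)).eval t0 with hTval
    have hcosh : Real.cosh (Real.log r) = t0 := by
      rw [Real.cosh_eq, Real.exp_log hr0, Real.exp_neg, Real.exp_log hr0, ht0, hr, haa, hbb,
        hD'def]
      have h1 : D + ε ≠ 0 := by linarith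
      have h2 : 2 * s + (D + ε) ≠ 0 := by linarith
      have h3 : (s + (D + ε)) ^ 2 - s ^ 2 ≠ 0 := by nlinarith
      field_simp
      ring
    have hTlb : r ^ m / 2 ≤ Tval := by
      rw [hTval, ← hcosh, cheb_eval_cosh]
      refine le_trans (le_of_eq ?_) (exp_le_cosh' _)
      rw [Real.exp_nat_mul, Real.exp_log hr0]
    have hT0 : 0 < Tval := lt_of_lt_of_le (by positivity) hTlb
    -- membership
    have hx2 : x ∈ Pspace b 2 n := by
      rw [hx]
      have heq : (fun f : H => ∑ k ∈ Finset.range n, ⟪f - h, b k⟫ ^ 2)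
          = ∑ k ∈ Finset.range n, fun f : H => ⟪f - h, b k⟫ ^ 2 := by
        funext f; rw [Finset.sum_apply]
      rw [heq]
      refine Submodule.sum_mem _ fun k hk => ?_
      have hk' := Finset.mem_range.mp hk
      have h1 : (fun f : H => ⟪f - h, b k⟫) ∈ Pspace b 1 n := by
        have heq2 : (fun f : H => ⟪f - h, b k⟫)
            = (fun f : H => ⟪f, b k⟫) + fun _ : H => -⟪h, b k⟫ := by
          funext f
          simp only [Pi.add_apply]
          rw [inner_sub_left]
          ring
        rw [heq2]
        exact Submodule.add_mem _ (coord_mem_Pspace b hk' le_rfl) (const_mem_Pspace b _)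
      have h2 := mul_mem_Pspace b h1 h1
      have heq3 : (fun f : H => ⟪f - h, b k⟫ ^ 2)
          = fun f : H => ⟪f - h, b k⟫ * ⟪f - h, b k⟫ := by
        funext f; ring
      rw [heq3]; exact h2
    have hu2 : u ∈ Pspace b 2 n := by
      rw [hu]
      have heq : (fun f : H => (aa + bb - 2 * x f) / (bb - aa))
          = (fun _ : H => (aa + bb) / (bb - aa)) + (-(2 / (bb - aa))) • x := by
        funext f
        simp only [Pi.add_apply, Pi.smul_apply, smul_eq_mul]
        field_simp
        ring
      rw [heq]
      exact Submodule.add_mem _ (const_mem_Pspace b _) (Submodule.smul_mem _ _ hx2)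
    have hq := cheb_mem_Pspace b hu2 m
    set p : H → ℝ := fun f => Tval⁻¹ * (Polynomial.Chebyshev.T ℝ (m:ℤ)).eval (u f) with hp
    have hpP : p ∈ Pspace b d n := by
      have h1 : p = Tval⁻¹ • (fun f => (Polynomial.Chebyshev.T ℝ (m:ℤ)).eval (u f)) := by
        funext f; rw [hp]; simp
      rw [h1]
      exact Submodule.smul_mem _ _ (Pspace_mono b (by omega) hq)
    have hxh : x h = 0 := by rw [hx]; simp
    have huh : u h = t0 := by
      rw [hu]
      simp only [hxh]
      rw [ht0]
      ring_nf
    have hph : p h = 1 := by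
      rw [hp]
      simp only [huh, ← hTval]
      exact inv_mul_cancel₀ hT0.ne'
    -- pointwise bound on F
    have hpf : ∀ f ∈ F, (p f)^2 ≤ (Tval⁻¹)^2 := by
      intro f hf
      have hxf : x f = N f ^ 2 := (hsq (f - h)).symm
      have h1 : aa ≤ x f := by
        rw [hxf, haa]
        have := hNlb f hf
        nlinarith [hs0]
      have h2 : x f ≤ bb := by
        have hub := hNub f hf
        have hNf0 : 0 ≤ N f := norm_nonneg _
        rw [hxf, hbb]
        nlinarith [hε]
      have hu1 : u f ≤ 1 := by rw [hu]; rw [div_le_one hba]; linarith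
      have hu_1 : -1 ≤ u f := by rw [hu]; rw [le_div_iff₀ hba]; linarith
      have habsT := cheb_abs_le m hu_1 hu1
      have habs : |p f| ≤ Tval⁻¹ := by
        rw [hp]
        simp only []
        rw [abs_mul, abs_of_pos (inv_pos.mpr hT0)]
        calc Tval⁻¹ * |(Polynomial.Chebyshev.T ℝ (m:ℤ)).eval (u f)|
            ≤ Tval⁻¹ * 1 := by
              exact mul_le_mul_of_nonneg_left habsT (inv_pos.mpr hT0).le
          _ = Tval⁻¹ := mul_one _
      calc (p f)^2 = |p f|^2 := (sq_abs _).symm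
        _ ≤ (Tval⁻¹)^2 := by
            exact pow_le_pow_left₀ (abs_nonneg _) habs 2
    -- integral bound
    have hbdd : BddBelow {y : ℝ | ∃ p ∈ Pspace b d n, p h = 1 ∧ y = ∫ f, (p f) ^ 2 ∂μ} := by
      refine ⟨0, fun z hz => ?_⟩
      obtain ⟨q', _, _, rfl⟩ := hz
      exact integral_nonneg fun f => sq_nonneg _
    have hymem : (∫ f, (p f) ^ 2 ∂μ)
        ∈ {y : ℝ | ∃ p ∈ Pspace b d n, p h = 1 ∧ y = ∫ f, (p f) ^ 2 ∂μ} :=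
      ⟨p, hpP, hph, rfl⟩
    have hyle : (∫ f, (p f) ^ 2 ∂μ) ≤ (Tval⁻¹)^2 := by
      have hFae : ∀ᵐ f ∂μ, f ∈ F := by
        rw [MeasureTheory.ae_iff]
        exact hsupp
      have hae : ∀ᵐ f ∂μ, ‖(p f)^2‖ ≤ (Tval⁻¹)^2 := by
        filter_upwards [hFae] with f hf
        rw [Real.norm_eq_abs, abs_of_nonneg (sq_nonneg _)]
        exact hpf f hf
      have hni := MeasureTheory.norm_integral_le_of_norm_le_const hae
      rw [probReal_univ, mul_one] at hni
      calc (∫ f, (p f) ^ 2 ∂μ) ≤ |∫ f, (p f) ^ 2 ∂μ| := le_abs_self _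
        _ ≤ (Tval⁻¹)^2 := by rwa [Real.norm_eq_abs] at hni
    -- numeric chain
    set q : ℝ := s / (s + D') with hqdef
    have hsd : 0 < s + D' := by linarith
    have hq1 : q ≤ 1 := by rw [hqdef, div_le_one hsd]; linarith
    have hq0 : 0 ≤ q := by rw [hqdef]; positivity
    have hrlow : (2:ℝ) ^ q ≤ r := by
      refine le_trans (two_rpow_le_one_add hq0 hq1) ?_
      rw [hr, le_div_iff₀ hD']
      have hqs : q * (s + D') = s := by rw [hqdef]; field_simp
      nlinarith [mul_nonneg hq0 hs0.le]
    have hTinv : (Tval⁻¹)^2 ≤ 4 / r ^ (2 * m) := by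
      have h1 : Tval⁻¹ ≤ 2 / r ^ m := by
        have h3 := inv_anti₀ (by positivity : (0:ℝ) < r ^ m / 2) hTlb
        rwa [inv_div] at h3
      have h4 : (Tval⁻¹)^2 ≤ (2 / r ^ m)^2 :=
        pow_le_pow_left₀ (inv_pos.mpr hT0).le h1 2
      refine h4.trans (le_of_eq ?_)
      rw [div_pow, ← pow_mul, mul_comm m 2]
      norm_num
    have hrm : (2:ℝ) ^ (q * d - 1) ≤ r ^ (2 * m) := by
      have h1 : ((2:ℝ) ^ q) ^ (2 * m) ≤ r ^ (2 * m) :=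
        pow_le_pow_left₀ (Real.rpow_nonneg (by norm_num) _) hrlow _
      refine le_trans ?_ h1
      rw [← Real.rpow_natCast ((2:ℝ) ^ q) (2 * m), ← Real.rpow_mul (by norm_num : (0:ℝ) ≤ 2)]
      rw [Real.rpow_le_rpow_left_iff one_lt_two]
      have h2 : (d : ℝ) - 1 ≤ ((2 * m : ℕ) : ℝ) := by
        have h2' : d ≤ 2 * m + 1 := by rw [hm]; omega
        have h2'' := (Nat.cast_le (α := ℝ)).mpr h2'
        push_cast at h2'' ⊢
        linarith
      nlinarith [h2, hq0, hq1]
    have hfinal : 4 / r ^ (2 * m) ≤ 2 ^ ((3:ℝ) - q * d) := by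
      have h2pos : (0:ℝ) < 2 ^ (q * d - 1) := Real.rpow_pos_of_pos two_pos _
      have h1 : 4 / r ^ (2 * m) ≤ 4 / 2 ^ (q * d - 1) := by
        apply div_le_div_of_nonneg_left (by norm_num) h2pos hrm
      refine h1.trans (le_of_eq ?_)
      rw [div_eq_iff h2pos.ne', ← Real.rpow_add two_pos]
      have he : (3:ℝ) - q * d + (q * d - 1) = 2 := by ring
      rw [he]
      rw [show ((2:ℝ) : ℝ) = ((2:ℕ) : ℝ) by norm_num, Real.rpow_natCast]
      norm_num
    have hchain : Lam b μ d n h ≤ 2 ^ ((3:ℝ) - q * d) := by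
      rw [Lam]
      exact le_trans (csInf_le hbdd hymem) (hyle.trans (hTinv.trans hfinal))
    exact hchain
  -- take ε → 0
  have hsD : 0 < s + D := by linarith
  have hlim : Filter.Tendsto (fun ε : ℝ => (2:ℝ) ^ ((3:ℝ) - s / (s + (D + ε)) * d))
      (nhdsWithin 0 (Set.Ioi 0)) (nhds ((2:ℝ) ^ ((3:ℝ) - s / (s + D) * d))) := by
    have h1 : ContinuousAt (fun ε : ℝ => (3:ℝ) - s / (s + (D + ε)) * d) 0 := by
      refine ContinuousAt.sub continuousAt_const (ContinuousAt.mul ?_ continuousAt_const)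
      refine ContinuousAt.div continuousAt_const
        (continuousAt_const.add (continuousAt_const.add continuousAt_id)) ?_
      simpa using hsD.ne'
    have hc : ContinuousAt (fun ε : ℝ => (2:ℝ) ^ ((3:ℝ) - s / (s + (D + ε)) * d)) 0 :=
      (Real.continuousAt_const_rpow (by norm_num : (2:ℝ) ≠ 0)).comp h1
    have h2 := hc.continuousWithinAt (s := Set.Ioi (0:ℝ))
    have h3 : (3:ℝ) - s / (s + (D + 0)) * d = (3:ℝ) - s / (s + D) * d := by norm_num
    rw [ContinuousWithinAt, h3] at h2
    exact h2
  have h1 : Lam b μ d n h ≤ (2:ℝ) ^ ((3:ℝ) - s / (s + D) * d) := by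
    refine ge_of_tendsto hlim ?_
    filter_upwards [self_mem_nhdsWithin] with ε hε
    exact key ε hε
  refine h1.trans ?_
  rw [Real.rpow_le_rpow_left_iff one_lt_two]
  have hcomp : δ / (δ + D) ≤ s / (s + D) := by
    rw [div_le_div_iff₀ (by linarith) hsD]
    nlinarith
  have := mul_le_mul_of_nonneg_right hcomp (Nat.cast_nonneg d (α := ℝ))
  linarith
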